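/- arXiv:1405.2953 — 2 statements merged into one kernel-verified Lean document; each statement's English description precedes it below -/
import Mathlib

section
/- The cluster-type change of variables z ↦ z/(x+y+1) applied to f₀ = (x+y+1)³/(xyz) + z yields f₁ = (x+y+1)²/(xyz) + z(x+y+1); applying it again to f₁ yields f₁ back up to toric change of variables, and applying it a third time yields f₀ back up to toric change of variables. -/
/-! Write `s = x + y + 1`. The substitution `z ↦ zs` divides `1/(xyz)` by `s` and multiplies
`z` by `s`, so it moves one factor of `s` from the first term of `s^a/(xyz) + z s^b` to the
second: `f₀ = (3, 0) ↦ (2, 1) = f₁ ↦ (1, 2) ↦ (0, 3)`. The toric involution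
`(x, y, z) ↦ (x, y, 1/(xyz))`, with exponent matrix of determinant `-1`, exchanges the monomials
`1/(xyz)` and `z`, i.e. turns `(a, b)` into `(b, a)`; hence `(1, 2)` is toric to `f₁` and `(0, 3)`
to `f₀`. -/

/-- The field `ℂ(x,y,z)` of rational functions in three variables. -/
abbrev K3 := FractionRing (MvPolynomial (Fin 3) ℂ)

/-- The coordinate functions `x, y, z` in `ℂ(x,y,z)`. -/
noncomputable def Xv (i : Fin 3) : K3 := algebraMap (MvPolynomial (Fin 3) ℂ) K3 (MvPolynomial.X i)

/-- The monomial in `x, y, z` with exponent vector given by the `i`-th row of an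
integer matrix `M`; substituting these monomials for the variables is the toric change
of variables attached to `M ∈ GL(3,ℤ)`. -/
noncomputable def toricMono (M : Matrix (Fin 3) (Fin 3) ℤ) (i : Fin 3) : K3 :=
  Xv 0 ^ M i 0 * Xv 1 ^ M i 1 * Xv 2 ^ M i 2

/-- `f₀ = (x+y+1)³/(xyz) + z`, the Hori–Vafa weak LG model of the cubic threefold. -/
noncomputable def F₀ (x y z : K3) : K3 := (x + y + 1) ^ 3 / (x * y * z) + z

/-- `f₁ = (x+y+1)²/(xyz) + z(x+y+1)`. -/
noncomputable def F₁ (x y z : K3) : K3 := (x + y + 1) ^ 2 / (x * y * z) + z * (x + y + 1)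

/-- The result `(x+y+1)/(xyz) + z(x+y+1)²` of applying the change of variables to `f₁`. -/
noncomputable def G₂ (x y z : K3) : K3 := (x + y + 1) / (x * y * z) + z * (x + y + 1) ^ 2

lemma Xv_ne_zero (i : Fin 3) : Xv i ≠ 0 := by
  simp [Xv, MvPolynomial.X_ne_zero]

lemma Xv_add_Xv_add_one_ne_zero (i j : Fin 3) : Xv i + Xv j + 1 ≠ 0 := by
  have hmap : Xv i + Xv j + 1 =
      algebraMap (MvPolynomial (Fin 3) ℂ) K3 (MvPolynomial.X i + MvPolynomial.X j + 1) := by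
    simp [Xv]
  rw [hmap, Ne, IsFractionRing.to_map_eq_zero_iff]
  intro h
  simpa using congrArg (MvPolynomial.eval (0 : Fin 3 → ℂ)) h

section Cluster

variable {x y : K3} (z : K3)

lemma F₀_mul_sum (hs : x + y + 1 ≠ 0) : F₀ x y (z * (x + y + 1)) = F₁ x y z := by
  unfold F₀ F₁
  rw [← mul_assoc, pow_succ, mul_div_mul_right _ _ hs]

lemma F₁_mul_sum (hs : x + y + 1 ≠ 0) : F₁ x y (z * (x + y + 1)) = G₂ x y z := by
  unfold F₁ G₂
  rw [← mul_assoc, pow_two, mul_div_mul_right _ _ hs]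
  ring

lemma G₂_eq_F₁_inv (hx : x ≠ 0) (hy : y ≠ 0) : G₂ x y z = F₁ x y (x * y * z)⁻¹ := by
  unfold F₁ G₂
  field_simp
  ring

lemma G₂_mul_sum_eq_F₀_inv (hx : x ≠ 0) (hy : y ≠ 0) (hs : x + y + 1 ≠ 0) :
    G₂ x y (z * (x + y + 1)) = F₀ x y (x * y * z)⁻¹ := by
  unfold F₀ G₂
  field_simp
  ring

end Cluster

def inversionMatrix : Matrix (Fin 3) (Fin 3) ℤ := !![1, 0, 0; 0, 1, 0; -1, -1, -1]

lemma isUnit_det_inversionMatrix : IsUnit inversionMatrix.det := by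
  simp [inversionMatrix, Matrix.det_fin_three]

lemma toricMono_inversionMatrix :
    toricMono inversionMatrix = ![Xv 0, Xv 1, (Xv 0 * Xv 1 * Xv 2)⁻¹] := by
  ext i
  fin_cases i <;> simp [toricMono, inversionMatrix, mul_comm]

/-- the cluster-type change of variables `z ↦ z/(x+y+1)` (substituting
`z(x+y+1)` for `z`) transforms `f₀` into `f₁`; applying it again to `f₁` yields `f₁`
back up to a toric change of variables; and applying it a third time yields `f₀` back
up to a toric change of variables. -/
theorem cubic_cluster_transformation :
    F₀ (Xv 0) (Xv 1) (Xv 2 * (Xv 0 + Xv 1 + 1)) = F₁ (Xv 0) (Xv 1) (Xv 2) ∧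
      (F₁ (Xv 0) (Xv 1) (Xv 2 * (Xv 0 + Xv 1 + 1)) = G₂ (Xv 0) (Xv 1) (Xv 2) ∧
        ∃ M : Matrix (Fin 3) (Fin 3) ℤ, IsUnit M.det ∧
          G₂ (Xv 0) (Xv 1) (Xv 2) =
            F₁ (toricMono M 0) (toricMono M 1) (toricMono M 2)) ∧
      ∃ M : Matrix (Fin 3) (Fin 3) ℤ, IsUnit M.det ∧
        G₂ (Xv 0) (Xv 1) (Xv 2 * (Xv 0 + Xv 1 + 1)) =
          F₀ (toricMono M 0) (toricMono M 1) (toricMono M 2) := by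
  have hx := Xv_ne_zero 0
  have hy := Xv_ne_zero 1
  have hs := Xv_add_Xv_add_one_ne_zero 0 1
  refine ⟨F₀_mul_sum _ hs, ⟨F₁_mul_sum _ hs, inversionMatrix, isUnit_det_inversionMatrix, ?_⟩,
    inversionMatrix, isUnit_det_inversionMatrix, ?_⟩
  · rw [toricMono_inversionMatrix]
    exact G₂_eq_F₁_inv _ hx hy
  · rw [toricMono_inversionMatrix]
    exact G₂_mul_sum_eq_F₀_inv _ hx hy hs
end

section
/- For all i ≥ 0, the Laurent polynomials f₀ = (x+y+1)³/(xyz) + z and f₁ = (x+y+1)²/(xyz) + z(x+y+1) have equal constant terms of their i-th powers: the constant term of f₀^i equals the constant term of f₁^i. -/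
/-- The ring of Laurent polynomials `ℂ[x^{±1}, y^{±1}, z^{±1}]`. -/
abbrev L3 := AddMonoidAlgebra ℂ (Fin 3 → ℤ)

/-- The monomial `x^a y^b z^c`. -/
noncomputable def mono (a b c : ℤ) : L3 := AddMonoidAlgebra.single ![a, b, c] 1

/-- `f₀ = (x+y+1)³/(xyz) + z`. -/
noncomputable def f₀ : L3 := (mono 1 0 0 + mono 0 1 0 + 1) ^ 3 * mono (-1) (-1) (-1) + mono 0 0 1

/-- `f₁ = (x+y+1)²/(xyz) + z(x+y+1)`. -/
noncomputable def f₁ : L3 :=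
  (mono 1 0 0 + mono 0 1 0 + 1) ^ 2 * mono (-1) (-1) (-1) +
    mono 0 0 1 * (mono 1 0 0 + mono 0 1 0 + 1)

/-- The constant term: the coefficient at `x⁰y⁰z⁰`. -/
def constantTerm (f : L3) : ℂ := f.coeff 0


/-! Write `P = x + y + 1`, which has `z`-degree `0`. Then `f₀ = P³ m + z` and `f₁ = P² m + P z` with
`m = (xyz)⁻¹`. In the binomial expansion of an `i`-th power the summand `m^k z^(i-k)` has
`z`-degree `i - 2k`, so only `2k = i` can contribute to the constant term, and there both expansions
carry the same factor `P^(3k)`. -/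

namespace AddMonoidAlgebra

theorem coeff_eq_zero_of_mem_gradeBy {R M ι : Type*} [CommSemiring R] {deg : M → ι} {f : R[M]}
    {i : ι} (hf : f ∈ gradeBy R deg i) {m : M} (hm : deg m ≠ i) : f.coeff m = 0 :=
  Finsupp.notMem_support_iff.mp fun h ↦ hm ((mem_gradeBy_iff _ _ _ _).mp hf h)

variable {R M : Type*} [CommSemiring R] [AddCommGroup M] {deg : M →+ ℤ}

theorem coeff_zero_mul_single_eq_zero {f : R[M]} (hf : f ∈ gradeBy R deg 0) {v : M}
    (hv : deg v ≠ 0) (r : R) : (f * single v r).coeff 0 = 0 := by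
  rw [coeff_mul_single_apply, zero_add, coeff_eq_zero_of_mem_gradeBy hf (by simpa using hv),
    zero_mul]

theorem pow_mul_single_mul_pow_mul_single (Q : R[M]) (u w : M) (a b k j n : ℕ) :
    (Q ^ a * single u 1) ^ k * (Q ^ b * single w 1) ^ j * (n : R[M]) =
      Q ^ (a * k + b * j) * single (k • u + j • w) (n : R) := by
  have hsingle : (single (k • u + j • w) (n : R) : R[M]) =
      single (k • u) 1 * single (j • w) 1 * single 0 (n : R) := by
    simp only [single_mul_single, add_zero, one_mul]
  rw [hsingle, mul_pow, mul_pow, single_pow, single_pow, natCast_def, pow_add, pow_mul, pow_mul,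
    one_pow, one_pow]
  ring

theorem coeff_zero_add_pow_eq_of_add_eq {Q : R[M]} (hQ : Q ∈ gradeBy R deg 0) {u w : M}
    (hu : deg u = -deg w) (hw : deg w ≠ 0) {a b c d : ℕ} (habcd : a + b = c + d) (i : ℕ) :
    ((Q ^ a * single u 1 + Q ^ b * single w 1) ^ i).coeff 0 =
      ((Q ^ c * single u 1 + Q ^ d * single w 1) ^ i).coeff 0 := by
  simp only [add_pow, coeff_sum, Finsupp.finsetSum_apply, pow_mul_single_mul_pow_mul_single]
  refine Finset.sum_congr rfl fun k _ ↦ ?_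
  by_cases hk : k = i - k
  · rw [← hk, ← add_mul, ← add_mul, habcd]
  · have hQn (n : ℕ) : Q ^ n ∈ gradeBy R deg 0 := by simpa using SetLike.pow_mem_graded n hQ
    have hdeg : deg (k • u + (i - k) • w) ≠ 0 := by
      rw [map_add, map_nsmul, map_nsmul, hu, smul_neg, neg_add_eq_sub, nsmul_eq_mul, nsmul_eq_mul,
        ← sub_mul]
      exact mul_ne_zero (by omega) hw
    rw [coeff_zero_mul_single_eq_zero (hQn _) hdeg, coeff_zero_mul_single_eq_zero (hQn _) hdeg]

end AddMonoidAlgebra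

open AddMonoidAlgebra

def zDegree : (Fin 3 → ℤ) →+ ℤ := Pi.evalAddMonoidHom (fun _ ↦ ℤ) 2

theorem zDegree_apply (v : Fin 3 → ℤ) : zDegree v = v 2 := rfl

theorem mono_mem_gradeBy_zDegree (a b c : ℤ) : mono a b c ∈ gradeBy ℂ zDegree c :=
  single_mem_gradeBy _ _ _

/-- for every `i ≥ 0`, the constant term of `f₀^i` equals the constant
term of `f₁^i`. -/
theorem cubic_constant_terms_agree (i : ℕ) :
    constantTerm (f₀ ^ i) = constantTerm (f₁ ^ i) := by
  let P : L3 := mono 1 0 0 + mono 0 1 0 + 1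
  have hP : P ∈ gradeBy ℂ zDegree 0 :=
    add_mem (add_mem (mono_mem_gradeBy_zDegree 1 0 0) (mono_mem_gradeBy_zDegree 0 1 0))
      SetLike.GradedOne.one_mem
  have hf₀ : f₀ = P ^ 3 * mono (-1) (-1) (-1) + P ^ 0 * mono 0 0 1 := by
    rw [pow_zero, one_mul]; rfl
  have hf₁ : f₁ = P ^ 2 * mono (-1) (-1) (-1) + P ^ 1 * mono 0 0 1 := by
    rw [pow_one, mul_comm P]; rfl
  rw [constantTerm, constantTerm, hf₀, hf₁]
  exact coeff_zero_add_pow_eq_of_add_eq hP (w := ![0, 0, 1]) (by simp [zDegree_apply])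
    (by simp [zDegree_apply]) (show 3 + 0 = 2 + 1 from rfl) i
end
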